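/- If n or m is odd and 3 ≤ n ≤ m−2, then every red/blue coloring of K_{n+m} contains a red K_{1,n} or a blue K_{1,m}+e. -/

import Mathlib

open SimpleGraph

/-- `Contains G H` : the graph `G` contains a copy of `H`. -/
def Contains {V W : Type*} (G : SimpleGraph V) (H : SimpleGraph W) : Prop :=
  ∃ f : W → V, Function.Injective f ∧ ∀ a b, H.Adj a b → G.Adj (f a) (f b)

/-- The star `K_{1,n}` on `n+1` vertices: vertex `0` is joined to all others. -/
def starG (n : ℕ) : SimpleGraph (Fin (n + 1)) :=
  SimpleGraph.fromRel (fun a _ => a = 0)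

/-- `K_{1,m}+e` on `m+1` vertices: vertex `0` joined to all others, plus the edge `{1,2}`. -/
def starPlusE (m : ℕ) : SimpleGraph (Fin (m + 1)) :=
  SimpleGraph.fromRel (fun a b => a = 0 ∨ (a = 1 ∧ b = 2))

/-!
Without a red `K_{1,n}` every red degree is at most `n - 1`, so every blue degree is at least `m`.
Two blue-adjacent vertices then have blue degrees summing to `2m > n + m`, hence a common blue
neighbour: a blue triangle. A blue triangle at a vertex of blue degree `≥ m` extends to a blue
`K_{1,m}+e` by adding `m - 2` further blue neighbours of that vertex.
-/

open Finset

theorem Finset.exists_injective_fin_mem {α : Type*} {t : Finset α} {n : ℕ} (h : n ≤ #t) :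
    ∃ f : Fin n → α, Function.Injective f ∧ ∀ i, f i ∈ t :=
  ⟨fun i => t.equivFin.symm (Fin.castLE h i),
    Subtype.val_injective.comp (t.equivFin.symm.injective.comp (Fin.castLE_injective h)),
    fun _ => (t.equivFin.symm _).2⟩

section

variable {V : Type*} {G : SimpleGraph V} {n : ℕ} {v : V} {f : Fin n → V}

theorem injective_vecCons_of_adj (hf : Function.Injective f) (hadj : ∀ i, G.Adj v (f i)) :
    Function.Injective (Matrix.vecCons v f) :=
  Fin.cons_injective_iff.2 ⟨fun ⟨i, hi⟩ => (hadj i).ne' hi, hf⟩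

theorem adj_vecCons_of_starG_adj (hadj : ∀ i, G.Adj v (f i)) {a b : Fin (n + 1)}
    (hab : (starG n).Adj a b) : G.Adj (Matrix.vecCons v f a) (Matrix.vecCons v f b) := by
  obtain ⟨hne, rfl | rfl⟩ := hab
  · cases b using Fin.cases with
    | zero => exact absurd rfl hne
    | succ j => simpa using hadj j
  · cases a using Fin.cases with
    | zero => exact absurd rfl hne
    | succ j => simpa using (hadj j).symm

theorem contains_starG_of_injective (hf : Function.Injective f) (hadj : ∀ i, G.Adj v (f i)) :
    Contains G (starG n) :=
  ⟨_, injective_vecCons_of_adj hf hadj, fun _ _ => adj_vecCons_of_starG_adj hadj⟩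

theorem contains_starPlusE_of_injective {f : Fin (n + 2) → V} (hf : Function.Injective f)
    (hadj : ∀ i, G.Adj v (f i)) (h01 : G.Adj (f 0) (f 1)) :
    Contains G (starPlusE (n + 2)) := by
  refine ⟨_, injective_vecCons_of_adj hf hadj, fun a b hab => ?_⟩
  obtain ⟨hne, (h0 | ⟨rfl, rfl⟩) | (h0 | ⟨rfl, rfl⟩)⟩ := hab
  · exact adj_vecCons_of_starG_adj hadj ⟨hne, .inl h0⟩
  · simpa using h01
  · exact adj_vecCons_of_starG_adj hadj ⟨hne, .inr h0⟩
  · simpa using h01.symm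

end

section

variable {V : Type*} [Fintype V] (G : SimpleGraph V) [DecidableRel G.Adj]

theorem contains_starG_of_le_degree {n : ℕ} {v : V} (h : n ≤ G.degree v) :
    Contains G (starG n) := by
  obtain ⟨f, hf, hmem⟩ := exists_injective_fin_mem h
  exact contains_starG_of_injective hf fun i => (G.mem_neighborFinset v _).1 (hmem i)

theorem contains_starPlusE_of_adj_of_le_degree [DecidableEq V] {k : ℕ} {v u w : V}
    (hu : G.Adj v u) (hw : G.Adj v w) (huw : G.Adj u w) (h : k + 2 ≤ G.degree v) :
    Contains G (starPlusE (k + 2)) := by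
  have hk : k ≤ #(G.neighborFinset v \ {u, w}) := by
    rw [card_sdiff_of_subset (by simp [insert_subset_iff, hu, hw]), card_pair huw.ne,
      card_neighborFinset_eq_degree]
    omega
  obtain ⟨g, hg, hmem⟩ := exists_injective_fin_mem hk
  simp only [mem_sdiff, mem_neighborFinset, mem_insert, mem_singleton, not_or] at hmem
  refine contains_starPlusE_of_injective (v := v) (f := Matrix.vecCons u (Matrix.vecCons w g))
    ?_ (Fin.cases hu (Fin.cases hw fun i => (hmem i).1)) (by simpa using huw)
  refine Fin.cons_injective_iff.2 ⟨?_, Fin.cons_injective_iff.2 ⟨?_, hg⟩⟩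
  · rintro ⟨i, hi⟩
    cases i using Fin.cases with
    | zero => exact huw.ne (by simpa using hi.symm)
    | succ j => exact (hmem j).2.1 (by simpa using hi)
  · rintro ⟨i, hi⟩
    exact (hmem i).2.2 hi

theorem exists_adj_adj_of_card_lt_degree_add_degree [DecidableEq V] {u v : V}
    (h : Fintype.card V < G.degree u + G.degree v) : ∃ w, G.Adj u w ∧ G.Adj v w := by
  rw [← card_neighborFinset_eq_degree, ← card_neighborFinset_eq_degree, ← card_univ] at h
  obtain ⟨w, hw⟩ := inter_nonempty_of_card_lt_card_add_card (subset_univ _) (subset_univ _) h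
  simp only [mem_inter, mem_neighborFinset] at hw
  exact ⟨w, hw⟩

end

theorem stmt_4_general (n m : ℕ) (hnm : n + 2 ≤ m) (R : SimpleGraph (Fin (n + m))) :
    Contains R (starG n) ∨ Contains Rᶜ (starPlusE m) := by
  classical
  refine or_iff_not_imp_left.2 fun hred => ?_
  have hblue (v : Fin (n + m)) : m ≤ Rᶜ.degree v := by
    have hred_lt : R.degree v < n := not_le.1 fun h => hred (contains_starG_of_le_degree R h)
    have := R.degree_compl v
    rw [Fintype.card_fin] at this
    omega
  obtain ⟨k, rfl⟩ : ∃ k, m = k + 2 := ⟨m - 2, by omega⟩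
  let v : Fin (n + (k + 2)) := 0
  obtain ⟨u, hvu⟩ := (Rᶜ.degree_pos_iff_exists_adj v).1 (by linarith [hblue v])
  obtain ⟨w, hvw, huw⟩ := exists_adj_adj_of_card_lt_degree_add_degree Rᶜ (u := v) (v := u)
    (by rw [Fintype.card_fin]; linarith [hblue v, hblue u])
  exact contains_starPlusE_of_adj_of_le_degree Rᶜ hvu hvw huw (hblue v)

theorem stmt_4 (n m : ℕ) (hodd : Odd n ∨ Odd m) (hn : 3 ≤ n) (hnm : n + 2 ≤ m)
    (R : SimpleGraph (Fin (n + m))) :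
    Contains R (starG n) ∨ Contains Rᶜ (starPlusE m) :=
  stmt_4_general n m hnm R
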